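/- Let 1 < α < 2, E a Banach space, A bounded on E with ‖A‖ ≤ ω, and let ξ : [0,T] → E be continuous satisfying ‖ξ(t)‖ ≤ a + L M ∫_0^t (t-τ)^{α-1} ‖ξ(τ)‖ dτ for constants a, L, M ≥ 0. Then ‖ξ(t)‖ ≤ a E_α(L M Γ(α) t^α) for all t ∈ [0,T] (a fractional Gronwall inequality). -/

import Mathlib

/-!
Substituting the inequality into itself `n` times, starting from a uniform bound `K` for the
continuous function on `[0, T]`, bounds it by the `n`-th partial sum of `a E_α(x)` plus
`K xⁿ/Γ(1 + nα)`, where `x = L M Γ(α) t^α`. Each substitution is exact on the power terms: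
by the Beta integral, `∫₀ᵗ (t - τ)^(α-1) τ^(kα) dτ = Γ(α) Γ(1 + kα)/Γ(1 + (k+1)α) · t^((k+1)α)`,
which is precisely what turns the `k`-th Mittag-Leffler term into the `(k+1)`-st. The remainder
tends to `0` because `Γ(1 + nα) ≥ n!`.
-/

open Real MeasureTheory intervalIntegral

noncomputable def mittagLeffler (α x : ℝ) : ℝ :=
  ∑' n : ℕ, x ^ n / Real.Gamma (1 + n * α)

open Set Filter Topology

theorem integral_rpow_mul_sub_rpow {p q t : ℝ} (hp : 0 < p) (hq : 0 < q) (ht : 0 < t) :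
    ∫ τ in (0:ℝ)..t, τ ^ (p - 1) * (t - τ) ^ (q - 1)
      = Gamma p * Gamma q / Gamma (p + q) * t ^ (p + q - 1) := by
  have hbeta := Complex.betaIntegral_scaled p q ht
  rw [Complex.betaIntegral_eq_Gamma_mul_div _ _ (by simpa) (by simpa), ← Complex.ofReal_add,
    Complex.Gamma_ofReal, Complex.Gamma_ofReal, Complex.Gamma_ofReal] at hbeta
  apply Complex.ofReal_injective
  rw [← intervalIntegral.integral_ofReal]
  convert hbeta using 1
  · refine intervalIntegral.integral_congr fun τ hτ => ?_
    rw [uIcc_of_le ht.le] at hτ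
    push_cast [Complex.ofReal_cpow hτ.1, Complex.ofReal_cpow (sub_nonneg.2 hτ.2)]
    rfl
  · push_cast [Complex.ofReal_cpow ht.le]
    ring

theorem factorial_le_Gamma_one_add_mul {α : ℝ} (hα : 1 ≤ α) (n : ℕ) :
    (n.factorial : ℝ) ≤ Gamma (1 + n * α) := by
  rcases n.eq_zero_or_pos with rfl | hn
  · simp
  have hn1 : (1 : ℝ) ≤ n := by exact_mod_cast hn
  rw [← Gamma_nat_eq_factorial, add_comm]
  exact Gamma_strictMonoOn_Ici.monotoneOn (by simp; linarith) (by simp; nlinarith) (by nlinarith)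

noncomputable def mittagLefflerTerm (α x : ℝ) (n : ℕ) : ℝ :=
  x ^ n / Gamma (1 + n * α)

@[simp]
theorem mittagLefflerTerm_zero (α x : ℝ) : mittagLefflerTerm α x 0 = 1 := by
  simp [mittagLefflerTerm]

theorem summable_mittagLefflerTerm {α : ℝ} (hα : 1 ≤ α) (x : ℝ) :
    Summable (mittagLefflerTerm α x) := by
  refine .of_norm_bounded (summable_pow_div_factorial |x|) fun n => ?_
  have hΓ : 0 < Gamma (1 + n * α) := Gamma_pos_of_pos (by positivity)
  rw [mittagLefflerTerm, norm_div, norm_pow, Real.norm_eq_abs, Real.norm_of_nonneg hΓ.le]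
  exact div_le_div_of_nonneg_left (by positivity) (by positivity)
    (factorial_le_Gamma_one_add_mul hα n)

theorem mittagLefflerTerm_mul_rpow {α t : ℝ} (ht : 0 ≤ t) (c : ℝ) (n : ℕ) :
    mittagLefflerTerm α (c * t ^ α) n = c ^ n / Gamma (1 + n * α) * t ^ (n * α) := by
  rw [mittagLefflerTerm, mul_pow, ← rpow_natCast (t ^ α), ← rpow_mul ht, mul_comm α]
  ring

theorem continuous_mittagLefflerTerm_rpow {α : ℝ} (hα : 0 ≤ α) (c : ℝ) (n : ℕ) :
    Continuous fun t => mittagLefflerTerm α (c * t ^ α) n := by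
  unfold mittagLefflerTerm
  fun_prop (disch := exact hα)

/-- `Γ(α)` times the Riemann–Liouville integral of order `α` of `u`, evaluated at `t`. -/
noncomputable def abelIntegral (α : ℝ) (u : ℝ → ℝ) (t : ℝ) : ℝ :=
  ∫ τ in (0:ℝ)..t, (t - τ) ^ (α - 1) * u τ

section AbelIntegral

variable {α t : ℝ} {u v : ℝ → ℝ}

theorem intervalIntegrable_abelKernel_mul (hα : 1 ≤ α) (hu : ContinuousOn u (uIcc 0 t)) :
    IntervalIntegrable (fun τ => (t - τ) ^ (α - 1) * u τ) volume 0 t := by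
  have hker : Continuous fun τ : ℝ => (t - τ) ^ (α - 1) :=
    (continuous_const.sub continuous_id).rpow_const fun _ => Or.inr (by linarith)
  exact (hker.continuousOn.mul hu).intervalIntegrable

theorem abelIntegral_mono (hα : 1 ≤ α) (ht : 0 ≤ t) (hu : ContinuousOn u (Icc 0 t))
    (hv : ContinuousOn v (Icc 0 t)) (huv : ∀ τ ∈ Icc 0 t, u τ ≤ v τ) :
    abelIntegral α u t ≤ abelIntegral α v t := by
  rw [← uIcc_of_le ht] at hu hv
  refine integral_mono_on ht (intervalIntegrable_abelKernel_mul hα hu)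
    (intervalIntegrable_abelKernel_mul hα hv) fun τ hτ => ?_
  exact mul_le_mul_of_nonneg_left (huv τ hτ) (rpow_nonneg (sub_nonneg.2 hτ.2) _)

theorem abelIntegral_add (hα : 1 ≤ α) (hu : Continuous u) (hv : Continuous v) :
    abelIntegral α (fun τ => u τ + v τ) t = abelIntegral α u t + abelIntegral α v t := by
  simp only [abelIntegral, mul_add]
  exact integral_add (intervalIntegrable_abelKernel_mul hα hu.continuousOn)
    (intervalIntegrable_abelKernel_mul hα hv.continuousOn)

theorem abelIntegral_const_mul (c : ℝ) :
    abelIntegral α (fun τ => c * u τ) t = c * abelIntegral α u t := by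
  simp only [abelIntegral, mul_left_comm _ c, intervalIntegral.integral_const_mul]

theorem abelIntegral_finsetSum {ι : Type*} (s : Finset ι) {f : ι → ℝ → ℝ} (hα : 1 ≤ α)
    (hf : ∀ i ∈ s, Continuous (f i)) :
    abelIntegral α (fun τ => ∑ i ∈ s, f i τ) t = ∑ i ∈ s, abelIntegral α (f i) t := by
  simp only [abelIntegral, Finset.mul_sum]
  exact integral_finsetSum fun i hi =>
    intervalIntegrable_abelKernel_mul hα (hf i hi).continuousOn

theorem abelIntegral_rpow {β : ℝ} (hα : 0 < α) (hβ : 0 ≤ β) (ht : 0 ≤ t) :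
    abelIntegral α (fun τ => τ ^ β) t
      = Gamma α * Gamma (β + 1) / Gamma (α + β + 1) * t ^ (α + β) := by
  rcases ht.eq_or_lt with rfl | ht
  · rw [abelIntegral, integral_same, zero_rpow (by linarith), mul_zero]
  have h := integral_rpow_mul_sub_rpow (by linarith : 0 < β + 1) hα ht
  simp only [add_sub_cancel_right] at h
  rw [abelIntegral]
  simp_rw [mul_comm ((t - _) ^ (α - 1))]
  rw [h, mul_comm (Gamma (β + 1)), show β + 1 + α - 1 = α + β by ring,
    show β + 1 + α = α + β + 1 by ring]

end AbelIntegral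

theorem mul_abelIntegral_mittagLefflerTerm {α t : ℝ} (hα : 0 < α) (ht : 0 ≤ t) (c : ℝ) (n : ℕ) :
    c * abelIntegral α (fun τ => mittagLefflerTerm α (c * Gamma α * τ ^ α) n) t
      = mittagLefflerTerm α (c * Gamma α * t ^ α) (n + 1) := by
  have hpow : abelIntegral α (fun τ => mittagLefflerTerm α (c * Gamma α * τ ^ α) n) t
      = (c * Gamma α) ^ n / Gamma (1 + n * α) * abelIntegral α (fun τ => τ ^ (n * α)) t := by
    rw [← abelIntegral_const_mul]
    refine integral_congr fun τ hτ => ?_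
    rw [uIcc_of_le ht] at hτ
    simp only [mittagLefflerTerm_mul_rpow hτ.1]
  have hΓ : Gamma (1 + n * α) ≠ 0 := (Gamma_pos_of_pos (by positivity)).ne'
  rw [hpow, abelIntegral_rpow hα (by positivity) ht, mittagLefflerTerm_mul_rpow ht,
    show α + n * α = ((n + 1 : ℕ) : ℝ) * α by push_cast; ring, add_comm (n * α) 1,
    add_comm (((n + 1 : ℕ) : ℝ) * α) 1]
  field_simp
  ring

/-- The bound obtained from the crude estimate `u ≤ K` after `n` substitutions into
`u ≤ a + c · abelIntegral α u`, evaluated at `x = c Γ(α) t^α`. -/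
noncomputable def gronwallMajorant (α a K x : ℝ) (n : ℕ) : ℝ :=
  a * ∑ k ∈ Finset.range n, mittagLefflerTerm α x k + K * mittagLefflerTerm α x n

theorem tendsto_gronwallMajorant {α : ℝ} (hα : 1 ≤ α) (a K x : ℝ) :
    Tendsto (gronwallMajorant α a K x) atTop (𝓝 (a * mittagLeffler α x)) := by
  have hsum := summable_mittagLefflerTerm hα x
  have h := (hsum.hasSum.tendsto_sum_nat.const_mul a).add (hsum.tendsto_atTop_zero.const_mul K)
  rw [mul_zero, add_zero] at h
  exact h

theorem add_mul_abelIntegral_gronwallMajorant {α t : ℝ} (hα : 1 ≤ α) (ht : 0 ≤ t)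
    (a c K : ℝ) (n : ℕ) :
    a + c * abelIntegral α (fun τ => gronwallMajorant α a K (c * Gamma α * τ ^ α) n) t
      = gronwallMajorant α a K (c * Gamma α * t ^ α) (n + 1) := by
  have hcont := continuous_mittagLefflerTerm_rpow (by linarith : 0 ≤ α) (c * Gamma α)
  simp only [gronwallMajorant]
  rw [abelIntegral_add hα (by fun_prop) (by fun_prop), abelIntegral_const_mul,
    abelIntegral_const_mul, abelIntegral_finsetSum _ hα fun k _ => hcont k, mul_add,
    mul_left_comm c a, mul_left_comm c K, Finset.mul_sum]
  simp only [mul_abelIntegral_mittagLefflerTerm (by linarith : 0 < α) ht c]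
  rw [Finset.sum_range_succ' _ n, mittagLefflerTerm_zero]
  ring

theorem le_mul_mittagLeffler_of_le_add_abelIntegral {α a c T : ℝ} {u : ℝ → ℝ} (hα : 1 ≤ α)
    (hc : 0 ≤ c) (hu : ContinuousOn u (Icc 0 T))
    (hbd : ∀ t ∈ Icc 0 T, u t ≤ a + c * abelIntegral α u t) :
    ∀ t ∈ Icc 0 T, u t ≤ a * mittagLeffler α (c * Gamma α * t ^ α) := by
  obtain ⟨K, hK⟩ := isCompact_Icc.exists_bound_of_continuousOn hu
  have hcont := continuous_mittagLefflerTerm_rpow (by linarith : 0 ≤ α) (c * Gamma α)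
  have hmaj : ∀ n, ∀ t ∈ Icc 0 T, u t ≤ gronwallMajorant α a K (c * Gamma α * t ^ α) n := by
    intro n
    induction n with
    | zero =>
      intro t ht
      simpa [gronwallMajorant] using (le_abs_self _).trans (hK t ht)
    | succ n ih =>
      intro t ht
      have hsub : Icc 0 t ⊆ Icc 0 T := Icc_subset_Icc_right ht.2
      rw [← add_mul_abelIntegral_gronwallMajorant hα ht.1]
      refine (hbd t ht).trans ?_
      gcongr
      exact abelIntegral_mono hα ht.1 (hu.mono hsub) (by unfold gronwallMajorant; fun_prop)
        fun τ hτ => ih τ (hsub hτ)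
  intro t ht
  exact ge_of_tendsto' (tendsto_gronwallMajorant hα a K _) fun n => hmaj n t ht

theorem fractional_gronwall_general {E : Type*} [NormedAddCommGroup E]
    (α : ℝ) (hα₁ : 1 < α) (T : ℝ)
    (ξ : ℝ → E) (hξ : ContinuousOn ξ (Set.Icc 0 T))
    (a L M : ℝ) (hL : 0 ≤ L) (hM : 0 ≤ M)
    (hbd : ∀ t ∈ Set.Icc (0:ℝ) T,
      ‖ξ t‖ ≤ a + L * M * ∫ τ in (0:ℝ)..t, (t - τ) ^ (α - 1) * ‖ξ τ‖) :
    ∀ t ∈ Set.Icc (0:ℝ) T,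
      ‖ξ t‖ ≤ a * mittagLeffler α (L * M * Real.Gamma α * t ^ α) :=
  le_mul_mittagLeffler_of_le_add_abelIntegral (u := fun t => ‖ξ t‖) hα₁.le
    (mul_nonneg hL hM) hξ.norm hbd

/-- Fractional Gronwall inequality: if `ξ : [0,T] → E` is continuous and
`‖ξ(t)‖ ≤ a + L M ∫_0^t (t-τ)^{α-1} ‖ξ(τ)‖ dτ` on `[0,T]`, then
`‖ξ(t)‖ ≤ a E_α(L M Γ(α) t^α)` on `[0,T]`. -/
theorem fractional_gronwall {E : Type*} [NormedAddCommGroup E] [NormedSpace ℝ E]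
    (α : ℝ) (hα₁ : 1 < α) (hα₂ : α < 2) (T : ℝ) (hT : 0 < T)
    (ξ : ℝ → E) (hξ : ContinuousOn ξ (Set.Icc 0 T))
    (a L M : ℝ) (ha : 0 ≤ a) (hL : 0 ≤ L) (hM : 0 ≤ M)
    (hbd : ∀ t ∈ Set.Icc (0:ℝ) T,
      ‖ξ t‖ ≤ a + L * M * ∫ τ in (0:ℝ)..t, (t - τ) ^ (α - 1) * ‖ξ τ‖) :
    ∀ t ∈ Set.Icc (0:ℝ) T,
      ‖ξ t‖ ≤ a * mittagLeffler α (L * M * Real.Gamma α * t ^ α) :=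
  fractional_gronwall_general α hα₁ T ξ hξ a L M hL hM hbd
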